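/- Let h : (ℝ^d)^n → ℝ^d be both translation-invariant (h(v₁+w,...,vₙ+w) = h(v₁,...,vₙ)) and O(d)-equivariant. Then there exist O(d)- and translation-invariant scalar functions f₁,...,fₙ with h(v₁,...,vₙ) = Σₜ fₜ(v₁,...,vₙ)vₜ and Σₜ fₜ(v₁,...,vₙ) = 0 for all inputs. -/

import Mathlib

/-!
Equivariance under the reflection in the span of the translated inputs `v i - v i₀`, which fixes
all of them, forces `h v` into that span, i.e. into the vector span of the inputs: `h v = ∑ cₜ vₜ`
with `∑ cₜ = 0`. To make the coefficients invariant, take the least-norm solution of the linear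
system `(∑ cₜ vₜ, ∑ cₜ) = (h v, 0)`. Rotating or translating the inputs composes this system with
an injective linear map of the target, which changes neither its kernel nor its solutions, hence
not its least-norm solution.
-/

open Submodule Matrix

namespace LinearMap

variable {𝕜 E F G : Type*} [RCLike 𝕜] [NormedAddCommGroup E] [InnerProductSpace 𝕜 E]
  [FiniteDimensional 𝕜 E] [AddCommGroup F] [Module 𝕜 F] [AddCommGroup G] [Module 𝕜 G]
  {L : E →ₗ[𝕜] F} {x : E} {y : F}

/-- The solution of `L x = y` lying in `(ker L)ᗮ`; junk unless `y ∈ range L`. -/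
noncomputable def leastNormSolution (L : E →ₗ[𝕜] F) (y : F) : E :=
  (ker L)ᗮ.starProjection (Function.invFun L y)

theorem leastNormSolution_eq_starProjection (hx : L x = y) :
    L.leastNormSolution y = (ker L)ᗮ.starProjection x := by
  have hker : Function.invFun L y - x ∈ ker L := by
    rw [mem_ker, map_sub, Function.invFun_eq ⟨x, hx⟩, hx, sub_self]
  rw [leastNormSolution, ← sub_eq_zero, ← map_sub]
  exact starProjection_orthogonal_apply_eq_zero hker

theorem apply_leastNormSolution (hx : L x = y) : L (L.leastNormSolution y) = y := by
  have hproj : L ((ker L).starProjection x) = 0 := (ker L).starProjection_apply_mem x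
  rw [leastNormSolution_eq_starProjection hx, starProjection_orthogonal_val, map_sub, hproj,
    sub_zero, hx]

theorem leastNormSolution_comp {φ : F →ₗ[𝕜] G} (hφ : Function.Injective φ) (hx : L x = y) :
    (φ ∘ₗ L).leastNormSolution (φ y) = L.leastNormSolution y := by
  have hker : ker (φ ∘ₗ L) = ker L := ker_comp_of_ker_eq_bot L (ker_eq_bot.mpr hφ)
  rw [leastNormSolution_eq_starProjection (x := x) (by rw [comp_apply, hx]),
    leastNormSolution_eq_starProjection hx, hker]

variable {V : Type*} [AddCommGroup V] [Module 𝕜 V]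

variable (𝕜) in
def shear (w : V) : V × 𝕜 →ₗ[𝕜] V × 𝕜 :=
  id + (snd 𝕜 V 𝕜).smulRight (w, 0)

@[simp]
theorem shear_apply (w x : V) (s : 𝕜) : shear 𝕜 w (x, s) = (x + s • w, s) := by
  simp [shear]

theorem shear_injective (w : V) : Function.Injective (shear 𝕜 w) := by
  rintro ⟨x, s⟩ ⟨x', s'⟩ hxs
  rw [shear_apply, shear_apply, Prod.mk.injEq] at hxs
  obtain ⟨hfst, rfl⟩ := hxs
  rw [add_right_cancel hfst]

end LinearMap

theorem LinearIsometryEquiv.exists_mem_orthogonalGroup_mulVec_eq {κ : Type*} [Fintype κ]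
    [DecidableEq κ] (φ : EuclideanSpace ℝ κ ≃ₗᵢ[ℝ] EuclideanSpace ℝ κ) :
    ∃ Q ∈ orthogonalGroup κ ℝ, ∀ x : κ → ℝ, Q *ᵥ x = φ (WithLp.toLp 2 x) := by
  set b := (EuclideanSpace.basisFun κ ℝ).toBasis
  exact ⟨φ.toLinearMap.toMatrix b b, φ.toMatrix_mem_unitaryGroup _ _,
    fun x => LinearMap.toMatrix_mulVec_repr b b φ.toLinearMap (WithLp.toLp 2 x)⟩

section Equivariant

variable {ι κ : Type*} [Fintype κ] [DecidableEq κ] {h : (ι → κ → ℝ) → κ → ℝ}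

theorem mem_span_range_of_orthogonal_equivariant
    (hQ : ∀ Q ∈ orthogonalGroup κ ℝ, ∀ v, h (fun i => Q *ᵥ v i) = Q *ᵥ h v) (v : ι → κ → ℝ) :
    h v ∈ span ℝ (Set.range v) := by
  set K := span ℝ (Set.range fun i => WithLp.toLp 2 (v i) : Set (EuclideanSpace ℝ κ))
  obtain ⟨Q, hQmem, hQK⟩ := K.reflection.exists_mem_orthogonalGroup_mulVec_eq
  have hfix : (fun i => Q *ᵥ v i) = v := by
    funext i
    rw [hQK, K.reflection_mem_subspace_eq_self (subset_span ⟨i, rfl⟩)]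
  have hK : WithLp.toLp 2 (h v) ∈ K := by
    rw [← K.reflection_eq_self_iff]
    apply WithLp.ofLp_injective
    rw [← hQK, ← hQ Q hQmem, hfix]
  have hspan := apply_mem_span_image_of_mem_span (WithLp.linearEquiv 2 ℝ (κ → ℝ)).toLinearMap hK
  rwa [← Set.range_comp] at hspan

theorem mem_vectorSpan_range_of_translation_invariant_of_orthogonal_equivariant
    (htrans : ∀ w v, h (fun i => v i + w) = h v)
    (hQ : ∀ Q ∈ orthogonalGroup κ ℝ, ∀ v, h (fun i => Q *ᵥ v i) = Q *ᵥ h v) (v : ι → κ → ℝ) :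
    h v ∈ vectorSpan ℝ (Set.range v) := by
  rcases isEmpty_or_nonempty ι with hι | ⟨⟨i₀⟩⟩
  · have hv := mem_span_range_of_orthogonal_equivariant hQ v
    rw [Set.range_eq_empty, span_empty, mem_bot] at hv
    rw [hv]
    exact zero_mem _
  · rw [vectorSpan_range_eq_span_range_vsub_right, ← htrans (-v i₀)]
    exact mem_span_range_of_orthogonal_equivariant hQ _

end Equivariant

section AffineCoeffMap

variable (𝕜 : Type*) {ι V W : Type*} [RCLike 𝕜] [Fintype ι] [AddCommGroup V] [Module 𝕜 V]
  [AddCommGroup W] [Module 𝕜 W]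

noncomputable def affineCoeffMap (v : ι → V) : EuclideanSpace 𝕜 ι →ₗ[𝕜] V × 𝕜 :=
  Fintype.linearCombination 𝕜 (fun i => (v i, 1)) ∘ₗ (WithLp.linearEquiv 2 𝕜 (ι → 𝕜)).toLinearMap

variable {𝕜}

theorem affineCoeffMap_apply (v : ι → V) (c : EuclideanSpace 𝕜 ι) :
    affineCoeffMap 𝕜 v c = (∑ i, c i • v i, ∑ i, c i) := by
  simp [affineCoeffMap, Fintype.linearCombination_apply, Prod.ext_iff, Prod.fst_sum, Prod.snd_sum]

theorem exists_affineCoeffMap_eq_of_mem_vectorSpan {v : ι → V} {x : V}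
    (hx : x ∈ vectorSpan 𝕜 (Set.range v)) :
    ∃ c : EuclideanSpace 𝕜 ι, affineCoeffMap 𝕜 v c = (x, 0) := by
  classical
  obtain ⟨s, w, hw, rfl⟩ := (mem_vectorSpan_iff_eq_weightedVSub 𝕜).mp hx
  refine ⟨WithLp.toLp 2 (Set.indicator s w), ?_⟩
  have hsum : ∑ i, Set.indicator s w i = 0 :=
    (Finset.sum_indicator_subset w (Finset.subset_univ s)).trans hw
  rw [affineCoeffMap_apply, Finset.weightedVSub_indicator_subset w v (Finset.subset_univ s),
    Finset.weightedVSub_eq_weightedVSubOfPoint_of_sum_eq_zero _ _ _ hsum 0,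
    Finset.weightedVSubOfPoint_apply]
  simp [hsum]

theorem affineCoeffMap_comp (A : V →ₗ[𝕜] W) (v : ι → V) :
    affineCoeffMap 𝕜 (fun i => A (v i)) = A.prodMap LinearMap.id ∘ₗ affineCoeffMap 𝕜 v := by
  ext c
  · simp [affineCoeffMap_apply, map_sum]
  · simp [affineCoeffMap_apply]

theorem affineCoeffMap_add_const (v : ι → V) (w : V) :
    affineCoeffMap 𝕜 (fun i => v i + w) = LinearMap.shear 𝕜 w ∘ₗ affineCoeffMap 𝕜 v := by
  ext c
  · simp [affineCoeffMap_apply, smul_add, Finset.sum_add_distrib, Finset.sum_smul]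
  · simp [affineCoeffMap_apply]

end AffineCoeffMap

/-- A translation-invariant, O(d)-equivariant vector function is a
combination of the inputs with O(d)- and translation-invariant scalar coefficients
summing to 0. -/
theorem translation_invariant_od_equivariant (d n : ℕ)
    (h : (Fin n → Fin d → ℝ) → Fin d → ℝ)
    (htrans : ∀ (w : Fin d → ℝ) (v : Fin n → Fin d → ℝ), h (fun i => v i + w) = h v)
    (hQ : ∀ Q : Matrix (Fin d) (Fin d) ℝ, Q ∈ Matrix.orthogonalGroup (Fin d) ℝ →
      ∀ v : Fin n → Fin d → ℝ, h (fun i => Q.mulVec (v i)) = Q.mulVec (h v)) :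
    ∃ f : Fin n → ((Fin n → Fin d → ℝ) → ℝ),
      (∀ t, ∀ Q : Matrix (Fin d) (Fin d) ℝ, Q ∈ Matrix.orthogonalGroup (Fin d) ℝ →
        ∀ v : Fin n → Fin d → ℝ, f t (fun i => Q.mulVec (v i)) = f t v) ∧
      (∀ t, ∀ (w : Fin d → ℝ) (v : Fin n → Fin d → ℝ), f t (fun i => v i + w) = f t v) ∧
      (∀ v : Fin n → Fin d → ℝ, h v = ∑ t, f t v • v t) ∧
      (∀ v : Fin n → Fin d → ℝ, ∑ t, f t v = 0) := by
  have hsol (v : Fin n → Fin d → ℝ) : ∃ c, affineCoeffMap ℝ v c = (h v, 0) :=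
    exists_affineCoeffMap_eq_of_mem_vectorSpan
      (mem_vectorSpan_range_of_translation_invariant_of_orthogonal_equivariant htrans hQ v)
  set c := fun v => (affineCoeffMap ℝ v).leastNormSolution (h v, 0)
  have hc (v : Fin n → Fin d → ℝ) : (∑ t, c v t • v t, ∑ t, c v t) = (h v, 0) := by
    obtain ⟨c₀, hc₀⟩ := hsol v
    rw [← affineCoeffMap_apply, LinearMap.apply_leastNormSolution hc₀]
  refine ⟨fun t v => c v t, fun t Q hQmem v => ?_, fun t w v => ?_,
    fun v => (congrArg Prod.fst (hc v)).symm, fun v => congrArg Prod.snd (hc v)⟩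
  · have hφ : Function.Injective (Q.mulVecLin.prodMap (LinearMap.id : ℝ →ₗ[ℝ] ℝ)) :=
      (mulVec_injective_of_isUnit (Unitary.isUnit_coe (U := ⟨Q, hQmem⟩))).prodMap
        Function.injective_id
    obtain ⟨c₀, hc₀⟩ := hsol v
    simp only [c, hQ Q hQmem v]
    rw [← LinearMap.leastNormSolution_comp hφ hc₀, ← affineCoeffMap_comp]
    simp only [LinearMap.prodMap_apply, mulVecLin_apply, LinearMap.id_apply]
  · obtain ⟨c₀, hc₀⟩ := hsol v
    simp only [c, htrans w v]
    rw [← LinearMap.leastNormSolution_comp (LinearMap.shear_injective w) hc₀,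
      ← affineCoeffMap_add_const, LinearMap.shear_apply, zero_smul, add_zero]
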